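/- arXiv:math-ph/0407011 — 2 statements merged into one kernel-verified Lean document; each statement's English description precedes it below -/
import Mathlib

section
/- Let n ≥ 3 and 2 ≤ j ≤ n−1. For all real numbers s and t one has the matrix identity exp(s·K₀₁) · exp(t·K₀ⱼ) · exp(−s·K₀₁) = exp(t·(cosh(s)·K₀ⱼ + sinh(s)·K₁ⱼ)). (Matrix form of the anti–de Sitter group relation e^{isM₀₁} e^{itM₀ⱼ} e^{−isM₀₁} = e^{it(cosh(s)M₀ⱼ + sinh(s)M₁ⱼ)}.) -/
/-!
Write `K = K₀₁` and `B = K₀ⱼ`. Since `K³ = K`, splitting the exponential series into even and odd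
parts gives `exp (s K) = 1 + sinh s K + (cosh s - 1) K²`, the hyperbolic analogue of Rodrigues'
formula. Because `j ∉ {0, 1}`, we have `K B K = 0` and `K² B + B K² = B`, so expanding
`exp (s K) B exp (-s K)` leaves only `cosh s B + sinh s ⁅K, B⁆`, and `⁅K₀₁, K₀ⱼ⁆ = K₁ⱼ`. The
relation follows because `exp` commutes with conjugation by the invertible matrix `exp (s K)`.
-/

open Matrix NormedSpace Real

/-- The matrix unit `E_{μν}`: the `(n+1)×(n+1)` real matrix with `1` in entry `(μ,ν)`
and `0` elsewhere. -/
noncomputable def E (n : ℕ) (μ ν : Fin (n + 1)) : Matrix (Fin (n + 1)) (Fin (n + 1)) ℝ :=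
  Matrix.single μ ν 1

/-- `K₀₁ = E₀₁ + E₁₀`, generator of the boost in the 0–1–plane. -/
noncomputable def K01 (n : ℕ) : Matrix (Fin (n + 1)) (Fin (n + 1)) ℝ := E n 0 1 + E n 1 0

/-- `K₀ₙ = E₀ₙ − Eₙ₀`, generator of the rotation in the 0–n–plane. -/
noncomputable def K0n (n : ℕ) : Matrix (Fin (n + 1)) (Fin (n + 1)) ℝ :=
  E n 0 (Fin.last n) - E n (Fin.last n) 0

/-- `K₁ₙ = E₁ₙ + Eₙ₁`, generator of the boost in the 1–n–plane. -/
noncomputable def K1n (n : ℕ) : Matrix (Fin (n + 1)) (Fin (n + 1)) ℝ :=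
  E n 1 (Fin.last n) + E n (Fin.last n) 1

/-- `K₀ⱼ = E₀ⱼ + Eⱼ₀`, generator of the boost in the 0–j–plane. -/
noncomputable def K0 (n : ℕ) (j : Fin (n + 1)) : Matrix (Fin (n + 1)) (Fin (n + 1)) ℝ :=
  E n 0 j + E n j 0

/-- `K₁ⱼ = E₁ⱼ − Eⱼ₁`, generator of the rotation in the 1–j–plane. -/
noncomputable def K1 (n : ℕ) (j : Fin (n + 1)) : Matrix (Fin (n + 1)) (Fin (n + 1)) ℝ :=
  E n 1 j - E n j 1

open scoped Nat

section PowThreeEqSelf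

variable {𝔸 : Type*} [NormedRing 𝔸] [NormedAlgebra ℝ 𝔸] [CompleteSpace 𝔸]

theorem pow_two_mul_add_one_of_pow_three_eq_self {M : Type*} [Monoid M] {a : M} (ha : a ^ 3 = a)
    (m : ℕ) : a ^ (2 * m + 1) = a := by
  induction m with
  | zero => simp
  | succ m ih => rw [show 2 * (m + 1) + 1 = 2 * m + 1 + 2 by ring, pow_add, ih, ← pow_succ', ha]

theorem exp_smul_of_pow_three_eq_self {a : 𝔸} (ha : a ^ 3 = a) (x : ℝ) :
    exp (x • a) = 1 + sinh x • a + (cosh x - 1) • a ^ 2 := by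
  have hodd : HasSum (fun m => ((2 * m + 1)! : ℝ)⁻¹ • (x • a) ^ (2 * m + 1)) (sinh x • a) := by
    refine ((hasSum_sinh x).smul_const a).congr_fun fun m => ?_
    rw [smul_pow, pow_two_mul_add_one_of_pow_three_eq_self ha, smul_smul, inv_mul_eq_div]
  have heven : HasSum (fun m => ((2 * m)! : ℝ)⁻¹ • (x • a) ^ (2 * m))
      (cosh x • a ^ 2 + (1 - a ^ 2)) := by
    refine (((hasSum_cosh x).smul_const (a ^ 2)).add (hasSum_ite_eq 0 (1 - a ^ 2))).congr_fun
      fun m => ?_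
    rcases m with _ | m
    · simp
    · have hpow : a ^ (2 * (m + 1)) = a ^ 2 := by
        rw [show 2 * (m + 1) = 2 * m + 1 + 1 by ring, pow_succ,
          pow_two_mul_add_one_of_pow_three_eq_self ha, sq]
      rw [smul_pow, hpow, smul_smul, inv_mul_eq_div, if_neg m.succ_ne_zero, add_zero]
  rw [(exp_series_hasSum_exp' (𝕂 := ℝ) (x • a)).unique (heven.even_add_odd hodd)]
  module

theorem exp_smul_mul_mul_exp_neg_smul {a b : 𝔸} (ha : a ^ 3 = a) (haba : a * b * a = 0)
    (hb : a ^ 2 * b + b * a ^ 2 = b) (s : ℝ) :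
    exp (s • a) * b * exp ((-s) • a) = cosh s • b + sinh s • ⁅a, b⁆ := by
  rw [exp_smul_of_pow_three_eq_self ha, exp_smul_of_pow_three_eq_self ha, sinh_neg, cosh_neg,
    Ring.lie_def]
  have haba' : a * (b * a) = 0 := by rw [← mul_assoc, haba]
  have haba_sq : a * (b * (a * a)) = 0 := by rw [← mul_assoc, ← mul_assoc, haba, zero_mul]
  simp only [sq, mul_assoc] at hb
  simp only [sq, mul_add, add_mul, smul_mul_assoc, mul_smul_comm, one_mul, mul_one, mul_assoc,
    haba', haba_sq, mul_zero, smul_zero, add_zero]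
  rw [eq_sub_of_add_eq' hb]
  module

end PowThreeEqSelf

section Generators

variable {n : ℕ} {j : Fin (n + 1)}

theorem K01_sq (h01 : (0 : Fin (n + 1)) ≠ 1) : K01 n ^ 2 = E n 0 0 + E n 1 1 := by
  simp [sq, K01, E, mul_add, add_mul, h01, h01.symm, add_comm]

theorem K01_pow_three (h01 : (0 : Fin (n + 1)) ≠ 1) : K01 n ^ 3 = K01 n := by
  rw [pow_succ, K01_sq h01]
  simp [K01, E, mul_add, add_mul, h01, h01.symm, add_comm]

theorem K01_mul_K0_mul_K01 (hj0 : j ≠ 0) (hj1 : j ≠ 1) : K01 n * K0 n j * K01 n = 0 := by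
  simp [K01, K0, E, mul_add, add_mul, hj0, hj1, hj0.symm, hj1.symm]

theorem K01_sq_mul_K0_add_K0_mul_K01_sq (h01 : (0 : Fin (n + 1)) ≠ 1) (hj0 : j ≠ 0)
    (hj1 : j ≠ 1) : K01 n ^ 2 * K0 n j + K0 n j * K01 n ^ 2 = K0 n j := by
  rw [K01_sq h01]
  simp [K0, E, mul_add, add_mul, h01, h01.symm, hj0, hj1, hj0.symm, hj1.symm, add_comm]

theorem lie_K01_K0 (h01 : (0 : Fin (n + 1)) ≠ 1) (hj0 : j ≠ 0) (hj1 : j ≠ 1) :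
    ⁅K01 n, K0 n j⁆ = K1 n j := by
  simp [Ring.lie_def, K01, K0, K1, E, mul_add, add_mul, h01, h01.symm, hj0, hj1, hj0.symm,
    hj1.symm]

end Generators

-- `exp` does not depend on the norm; any Banach-algebra norm lets the lemmas above apply.
attribute [local instance] Matrix.linftyOpNormedRing Matrix.linftyOpNormedAlgebra

theorem ads_relation_01_0j_general (n : ℕ) (j : Fin (n + 1))
    (hj2 : 2 ≤ (j : ℕ)) (s t : ℝ) :
    NormedSpace.exp (s • K01 n) * NormedSpace.exp (t • K0 n j) * NormedSpace.exp ((-s) • K01 n) =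
      NormedSpace.exp (t • (Real.cosh s • K0 n j + Real.sinh s • K1 n j)) := by
  have h1 : ((1 : Fin (n + 1)) : ℕ) = 1 := by rw [Fin.val_one', Nat.mod_eq_of_lt (by omega)]
  have h01 : (0 : Fin (n + 1)) ≠ 1 := by rw [Ne, Fin.ext_iff, h1, Fin.val_zero]; omega
  have hj0 : j ≠ 0 := by rintro rfl; simp at hj2
  have hj1 : j ≠ 1 := by rintro rfl; omega
  have hconj : exp (s • K01 n) * K0 n j * exp ((-s) • K01 n) =
      cosh s • K0 n j + sinh s • K1 n j := by
    rw [← lie_K01_K0 h01 hj0 hj1]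
    exact exp_smul_mul_mul_exp_neg_smul (K01_pow_three h01) (K01_mul_K0_mul_K01 hj0 hj1)
      (K01_sq_mul_K0_add_K0_mul_K01_sq h01 hj0 hj1) s
  rw [neg_smul, Matrix.exp_neg, ← Matrix.exp_conj _ _ (Matrix.isUnit_exp _), ← Matrix.exp_neg,
    ← neg_smul, mul_smul_comm, smul_mul_assoc, hconj]

/-- The AdS group relation `e^{sK₀₁} e^{tK₀ⱼ} e^{−sK₀₁} = e^{t(cosh(s)K₀ⱼ + sinh(s)K₁ⱼ)}`
for `2 ≤ j ≤ n − 1`. -/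
theorem ads_relation_01_0j (n : ℕ) (hn : 3 ≤ n) (j : Fin (n + 1))
    (hj2 : 2 ≤ (j : ℕ)) (hj : (j : ℕ) ≤ n - 1) (s t : ℝ) :
    NormedSpace.exp (s • K01 n) * NormedSpace.exp (t • K0 n j) * NormedSpace.exp ((-s) • K01 n) =
      NormedSpace.exp (t • (Real.cosh s • K0 n j + Real.sinh s • K1 n j)) :=
  ads_relation_01_0j_general n j hj2 s t
end

section
/- Let n ≥ 3, 2 ≤ j ≤ n−1 and r ∈ ℝ. Then, in the space of (n+1)×(n+1) real matrices, as s → +∞ the product exp(s·K₀₁) · exp(2r·e^{−s}·K₀ⱼ) · exp(−s·K₀₁) converges to exp(r·(K₀ⱼ + K₁ⱼ)), and the product exp(−s·K₀₁) · exp(2r·e^{−s}·K₀ⱼ) · exp(s·K₀₁) converges to exp(r·(K₀ⱼ − K₁ⱼ)). (This is the contraction-limit relation lim_{s→±∞} e^{isM₀₁} e^{i2re^{−|s|}M₀ⱼ} e^{−isM₀₁} = e^{ir(M₀ⱼ ± M₁ⱼ)} at the matrix level, producing the lightlike generators from boosts.) -/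
open Matrix NormedSpace Real

open Filter Topology

/-! The relations `⁅K₀₁, K₀ⱼ⁆ = K₁ⱼ` and `⁅K₀₁, K₁ⱼ⁆ = K₀ⱼ` say that conjugation by the boost
`exp (s K₀₁)` acts on `span {K₀ⱼ, K₁ⱼ}` as the hyperbolic rotation
`K₀ⱼ ↦ cosh s K₀ⱼ + sinh s K₁ⱼ`. Hence the product is
`exp (2r e^{-s} (cosh s K₀ⱼ + sinh s K₁ⱼ))`, whose coefficients `r (1 ± e^{-2s})` tend to `r`,
and continuity of `exp` gives the limit. Reversing the boost, `K₀₁ ↦ -K₀₁`, negates `K₁ⱼ`. -/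

theorem tendsto_two_mul_mul_exp_neg_mul_cosh (r : ℝ) :
    Tendsto (fun s => 2 * r * Real.exp (-s) * cosh s) atTop (𝓝 r) := by
  have h : ∀ s, 2 * r * Real.exp (-s) * cosh s = r + r * Real.exp (-s) ^ 2 := fun s => by
    rw [cosh_eq, Real.exp_neg]; field_simp
  simpa [h] using
    tendsto_const_nhds.add (tendsto_const_nhds.mul (tendsto_exp_neg_atTop_nhds_zero.pow 2))

theorem tendsto_two_mul_mul_exp_neg_mul_sinh (r : ℝ) :
    Tendsto (fun s => 2 * r * Real.exp (-s) * sinh s) atTop (𝓝 r) := by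
  have h : ∀ s, 2 * r * Real.exp (-s) * sinh s = r - r * Real.exp (-s) ^ 2 := fun s => by
    rw [sinh_eq, Real.exp_neg]; field_simp
  simpa [h] using
    tendsto_const_nhds.sub (tendsto_const_nhds.mul (tendsto_exp_neg_atTop_nhds_zero.pow 2))

section RatAlgebra

variable {𝔸 : Type*} [NormedRing 𝔸] [NormedAlgebra ℚ 𝔸] [CompleteSpace 𝔸]

theorem exp_mul_exp_neg (A : 𝔸) : exp A * exp (-A) = 1 := by
  rw [← exp_add_of_commute (Commute.refl A).neg_right, add_neg_cancel, NormedSpace.exp_zero]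

theorem exp_mul_exp_mul_exp_neg (A X : 𝔸) :
    exp A * exp X * exp (-A) = exp (exp A * X * exp (-A)) := by
  have hconj : SemiconjBy (exp A) X (exp A * X * exp (-A)) := by
    have := exp_mul_exp_neg (-A)
    rw [neg_neg] at this
    rw [SemiconjBy, mul_assoc _ (exp (-A)), this, mul_one]
  rw [hconj.exp_right.eq, mul_assoc, exp_mul_exp_neg, mul_one]

end RatAlgebra

section RealAlgebra

variable {𝔸 : Type*} [NormedRing 𝔸] [NormedAlgebra ℝ 𝔸] [CompleteSpace 𝔸]

theorem exp_smul_mul_mul_exp_neg_smul_s6 {A B C : 𝔸} (hB : ⁅A, B⁆ = C) (hC : ⁅A, C⁆ = B) (s : ℝ) :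
    exp (s • A) * B * exp ((-s) • A) = cosh s • B + sinh s • C := by
  have hM : ∀ t, HasDerivAt (fun u => cosh u • B + sinh u • C) (sinh t • B + cosh t • C) t :=
    fun t => ((hasDerivAt_cosh t).smul_const B).add ((hasDerivAt_sinh t).smul_const C)
  have hlie : ∀ t : ℝ, ⁅A, cosh t • B + sinh t • C⁆ = sinh t • B + cosh t • C := fun t => by
    have hlin : ⁅A, cosh t • B + sinh t • C⁆ = cosh t • ⁅A, B⁆ + sinh t • ⁅A, C⁆ := by
      simp only [Ring.lie_def, mul_add, add_mul, mul_smul_comm, smul_mul_assoc, smul_sub]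
      abel
    rw [hlin, hB, hC, add_comm]
  have hexp_neg : ∀ t : ℝ, HasDerivAt (fun u : ℝ => exp ((-u) • A))
      (-(exp ((-t) • A) * A)) t := fun t => by
    simpa [Function.comp_def] using
      (hasDerivAt_exp_smul_const A (-t)).scomp t (hasDerivAt_neg t)
  -- `M t := cosh t • B + sinh t • C` satisfies `M' = ⁅A, M⁆`,
  -- so `exp (-tA) M(t) exp (tA)` is constant
  have hconst : ∀ t : ℝ, HasDerivAt
      (fun u : ℝ => exp ((-u) • A) * (cosh u • B + sinh u • C) * exp (u • A)) 0 t := fun t => by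
    refine (((hexp_neg t).mul (hM t)).mul (hasDerivAt_exp_smul_const' A t)).congr_deriv ?_
    rw [← hlie, Ring.lie_def, Pi.mul_apply]
    generalize cosh t • B + sinh t • C = M
    noncomm_ring
  have hB_eq := is_const_of_deriv_eq_zero (fun t => (hconst t).differentiableAt)
    (fun t => (hconst t).deriv) 0 s
  simp only [neg_zero, zero_smul, NormedSpace.exp_zero, cosh_zero, sinh_zero, one_smul,
    add_zero, one_mul, mul_one, neg_smul] at hB_eq
  let +nondep : NormedAlgebra ℚ 𝔸 := .restrictScalars ℚ ℝ 𝔸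
  conv_lhs => rw [hB_eq, neg_smul]
  rw [← mul_assoc, ← mul_assoc, exp_mul_exp_neg, one_mul, mul_assoc, exp_mul_exp_neg, mul_one]

theorem exp_smul_mul_exp_smul_mul_exp_neg_smul {A B C : 𝔸} (hB : ⁅A, B⁆ = C) (hC : ⁅A, C⁆ = B)
    (a s : ℝ) :
    exp (s • A) * exp (a • B) * exp ((-s) • A) = exp ((a * cosh s) • B + (a * sinh s) • C) := by
  let +nondep : NormedAlgebra ℚ 𝔸 := .restrictScalars ℚ ℝ 𝔸
  rw [neg_smul, exp_mul_exp_mul_exp_neg, mul_smul_comm, smul_mul_assoc, ← neg_smul,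
    exp_smul_mul_mul_exp_neg_smul_s6 hB hC, smul_add, smul_smul, smul_smul]

theorem tendsto_exp_smul_mul_exp_smul_mul_exp_neg_smul {A B C : 𝔸} (hB : ⁅A, B⁆ = C)
    (hC : ⁅A, C⁆ = B) (r : ℝ) :
    Tendsto (fun s : ℝ => exp (s • A) * exp ((2 * r * Real.exp (-s)) • B) * exp ((-s) • A))
      atTop (𝓝 (exp (r • (B + C)))) := by
  let +nondep : NormedAlgebra ℚ 𝔸 := .restrictScalars ℚ ℝ 𝔸
  simp_rw [exp_smul_mul_exp_smul_mul_exp_neg_smul hB hC, smul_add]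
  exact (((tendsto_two_mul_mul_exp_neg_mul_cosh r).smul_const B).add
    ((tendsto_two_mul_mul_exp_neg_mul_sinh r).smul_const C)).exp

theorem tendsto_exp_neg_smul_mul_exp_smul_mul_exp_smul {A B C : 𝔸} (hB : ⁅A, B⁆ = C)
    (hC : ⁅A, C⁆ = B) (r : ℝ) :
    Tendsto (fun s : ℝ => exp ((-s) • A) * exp ((2 * r * Real.exp (-s)) • B) * exp (s • A))
      atTop (𝓝 (exp (r • (B - C)))) := by
  have hB' : ⁅-A, B⁆ = -C := by rw [← hB, Ring.lie_def, Ring.lie_def]; noncomm_ring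
  have hC' : ⁅-A, -C⁆ = B := by rw [← hC, Ring.lie_def, Ring.lie_def]; noncomm_ring
  simpa [sub_eq_add_neg] using tendsto_exp_smul_mul_exp_smul_mul_exp_neg_smul hB' hC' r

end RealAlgebra

theorem K01_lie_K0 {n : ℕ} {j : Fin (n + 1)} (hj0 : j ≠ 0) (hj1 : j ≠ 1) :
    ⁅K01 n, K0 n j⁆ = K1 n j := by
  obtain _ | m := n
  · exact absurd (Fin.fin_one_eq_zero j) hj0
  simp only [Ring.lie_def, K01, K0, K1, E, add_mul, mul_add]
  simp [hj0, hj1, hj0.symm, hj1.symm]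

theorem K01_lie_K1 {n : ℕ} {j : Fin (n + 1)} (hj0 : j ≠ 0) (hj1 : j ≠ 1) :
    ⁅K01 n, K1 n j⁆ = K0 n j := by
  obtain _ | m := n
  · exact absurd (Fin.fin_one_eq_zero j) hj0
  simp only [Ring.lie_def, K01, K0, K1, E, add_mul, mul_add, sub_mul, mul_sub]
  simp [hj0, hj1, hj0.symm, hj1.symm]

theorem ads_contraction_limit_general (n : ℕ) (j : Fin (n + 1))
    (hj2 : 2 ≤ (j : ℕ)) (r : ℝ) :
    Tendsto (fun s : ℝ =>
        exp (s • K01 n) * exp ((2 * r * Real.exp (-s)) • K0 n j) * exp ((-s) • K01 n))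
      atTop (𝓝 (exp (r • (K0 n j + K1 n j)))) ∧
    Tendsto (fun s : ℝ =>
        exp ((-s) • K01 n) * exp ((2 * r * Real.exp (-s)) • K0 n j) * exp (s • K01 n))
      atTop (𝓝 (exp (r • (K0 n j - K1 n j)))) := by
  -- any Banach-algebra norm will do: it induces the usual topology, and `exp` does not depend on it
  let : NormedRing (Matrix (Fin (n + 1)) (Fin (n + 1)) ℝ) := Matrix.linftyOpNormedRing
  let : NormedAlgebra ℝ (Matrix (Fin (n + 1)) (Fin (n + 1)) ℝ) := Matrix.linftyOpNormedAlgebra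
  have hj0 : j ≠ 0 := fun h => by simp [h] at hj2
  have hj1 : j ≠ 1 := fun h => by
    have := Nat.mod_le 1 (n + 1)
    simp only [h, Fin.val_one'] at hj2
    omega
  have hK0 := K01_lie_K0 hj0 hj1
  have hK1 := K01_lie_K1 hj0 hj1
  exact ⟨tendsto_exp_smul_mul_exp_smul_mul_exp_neg_smul hK0 hK1 r,
    tendsto_exp_neg_smul_mul_exp_smul_mul_exp_smul hK0 hK1 r⟩

/-- The contraction limits
`lim_{s→∞} e^{sK₀₁} e^{2re^{−s}K₀ⱼ} e^{−sK₀₁} = e^{r(K₀ⱼ + K₁ⱼ)}` and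
`lim_{s→∞} e^{−sK₀₁} e^{2re^{−s}K₀ⱼ} e^{sK₀₁} = e^{r(K₀ⱼ − K₁ⱼ)}`
for `2 ≤ j ≤ n − 1`, producing the lightlike generators from boosts. -/
theorem ads_contraction_limit (n : ℕ) (hn : 3 ≤ n) (j : Fin (n + 1))
    (hj2 : 2 ≤ (j : ℕ)) (hj : (j : ℕ) ≤ n - 1) (r : ℝ) :
    Tendsto (fun s : ℝ =>
        exp (s • K01 n) * exp ((2 * r * Real.exp (-s)) • K0 n j) * exp ((-s) • K01 n))
      atTop (𝓝 (exp (r • (K0 n j + K1 n j)))) ∧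
    Tendsto (fun s : ℝ =>
        exp ((-s) • K01 n) * exp ((2 * r * Real.exp (-s)) • K0 n j) * exp (s • K01 n))
      atTop (𝓝 (exp (r • (K0 n j - K1 n j)))) :=
  ads_contraction_limit_general n j hj2 r
end
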